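/- Let N ⊂ k[x₁,x₂,x₃] be the escalier of a strongly stable monomial ideal J, with ρ_{i,j} = |{a : x₁ᵃx₂^{j-1}x₃^{i-1} ∈ N}| and αᵢ the number of j with ρ_{i,j} > 0. Then in addition to strict decrease along rows, the shifted comparison ρ_{i,j} ≥ ρ_{i+1,j-1} holds whenever ρ_{i+1,j-1} > 0 and j ≥ 2; equivalently, setting π_{i,j} := ρ_{i, j-i+1} (shifting row i right by i-1), the array π is a shifted (1,0)-plane partition: π_{i,j} > π_{i,j+1} along rows and π_{i,j} ≥ π_{i+1,j} down columns. -/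

import Mathlib

def MonomialIdeal {n : ℕ} (I : Set (Fin n → ℕ)) : Prop :=
  ∀ τ ∈ I, ∀ σ : Fin n → ℕ, τ + σ ∈ I

def IsStronglyStable {n : ℕ} (I : Set (Fin n → ℕ)) : Prop :=
  ∀ τ ∈ I, ∀ i j : Fin n, τ i ≠ 0 → i < j →
    τ - Pi.single i 1 + Pi.single j 1 ∈ I

def mon3 (a b c : ℕ) : Fin 3 → ℕ := ![a, b, c]

/-!
Each row `{a | x₁ᵃ x₂ʲ x₃ⁱ ∉ J}` of the escalier is a finite lower set of `ℕ`, hence equal to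
`[0, ρ i j)`. Strong stability moves a factor `x₁` to `x₂`, or `x₂` to `x₃`, without leaving `J`;
contrapositively `x₁ᵃ x₂ʲ⁺¹ x₃ⁱ ∉ J` forces `x₁ᵃ⁺¹ x₂ʲ x₃ⁱ ∉ J`, and `x₁ᵃ x₂ʲ x₃ⁱ⁺¹ ∉ J` forces
`x₁ᵃ x₂ʲ⁺¹ x₃ⁱ ∉ J`. Applied to the last monomial of a row, these give the two inequalities.
-/

lemma Set.Finite.eq_Iio_natCard {s : Set ℕ} (hs : s.Finite) (hlow : IsLowerSet s) :
    s = Set.Iio (Nat.card s) := by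
  obtain hu | ⟨n, rfl⟩ := hlow.eq_univ_or_Iio
  · exact absurd (hu ▸ hs) Set.infinite_univ
  · rw [Nat.card_coe_set_eq, Set.ncard_Iio_nat]

lemma MonomialIdeal.isUpperSet {n : ℕ} {J : Set (Fin n → ℕ)} (hJ : MonomialIdeal J) :
    IsUpperSet J := fun τ σ hle hτ => by
  simpa [add_tsub_cancel_of_le hle] using hJ τ hτ (σ - τ)

lemma IsStronglyStable.add_single_mem {n : ℕ} {J : Set (Fin n → ℕ)} (hst : IsStronglyStable J)
    {τ : Fin n → ℕ} {i j : Fin n} (hij : i < j) (h : τ + Pi.single i 1 ∈ J) :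
    τ + Pi.single j 1 ∈ J := by
  simpa using hst _ h i j (by simp) hij

lemma mon3_add_single_zero (a b c : ℕ) : mon3 a b c + Pi.single 0 1 = mon3 (a + 1) b c := by
  funext k; fin_cases k <;> simp [mon3]

lemma mon3_add_single_one (a b c : ℕ) : mon3 a b c + Pi.single 1 1 = mon3 a (b + 1) c := by
  funext k; fin_cases k <;> simp [mon3]

lemma mon3_add_single_two (a b c : ℕ) : mon3 a b c + Pi.single 2 1 = mon3 a b (c + 1) := by
  funext k; fin_cases k <;> simp [mon3]

lemma monotone_mon3 (b c : ℕ) : Monotone fun a => mon3 a b c := fun a a' h k => by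
  fin_cases k <;> simp [mon3, h]

lemma injective_mon3 (b c : ℕ) : Function.Injective fun a => mon3 a b c := fun a a' h => by
  simpa [mon3] using congrFun h 0

section Escalier

variable {J : Set (Fin 3 → ℕ)}

lemma mon3_notMem_iff_lt_natCard (hJ : MonomialIdeal J) (hfin : {τ : Fin 3 → ℕ | τ ∉ J}.Finite)
    (a b c : ℕ) : mon3 a b c ∉ J ↔ a < Nat.card {a : ℕ | mon3 a b c ∉ J} := by
  have hrow : {a : ℕ | mon3 a b c ∉ J}.Finite :=
    hfin.preimage (injective_mon3 b c).injOn
  have hlow : IsLowerSet {a : ℕ | mon3 a b c ∉ J} :=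
    hJ.isUpperSet.compl.preimage (monotone_mon3 b c)
  exact Set.ext_iff.mp (hrow.eq_Iio_natCard hlow) a

lemma IsStronglyStable.mon3_succ_fst_notMem (hst : IsStronglyStable J) {a b c : ℕ}
    (h : mon3 a (b + 1) c ∉ J) : mon3 (a + 1) b c ∉ J := fun hmem => h <| by
  rw [← mon3_add_single_one]
  exact hst.add_single_mem (i := 0) (j := 1) (by decide) (by rwa [mon3_add_single_zero])

lemma IsStronglyStable.mon3_succ_snd_notMem (hst : IsStronglyStable J) {a b c : ℕ}
    (h : mon3 a b (c + 1) ∉ J) : mon3 a (b + 1) c ∉ J := fun hmem => h <| by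
  rw [← mon3_add_single_two]
  exact hst.add_single_mem (i := 1) (j := 2) (by decide) (by rwa [mon3_add_single_one])

end Escalier

theorem strongly_stable_escalier_gives_shifted_plane_partition
    (J : Set (Fin 3 → ℕ)) (hJ : MonomialIdeal J) (hst : IsStronglyStable J)
    (hfin : {τ : Fin 3 → ℕ | τ ∉ J}.Finite)
    (ρ : ℕ → ℕ → ℕ)
    (hρ : ∀ i j, ρ i j = Nat.card {a : ℕ | mon3 a j i ∉ J}) :
    (∀ i j, 0 < ρ i (j + 1) → ρ i (j + 1) < ρ i j) ∧
    (∀ i j, 0 < ρ (i + 1) j → ρ (i + 1) j ≤ ρ i (j + 1)) := by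
  have hrow : ∀ i j a, mon3 a j i ∉ J ↔ a < ρ i j := fun i j a => by
    rw [hρ]; exact mon3_notMem_iff_lt_natCard hJ hfin a j i
  constructor
  · intro i j hpos
    have hlast : mon3 (ρ i (j + 1) - 1) (j + 1) i ∉ J := (hrow i (j + 1) _).2 (by omega)
    have := (hrow i j _).1 (hst.mon3_succ_fst_notMem hlast)
    omega
  · intro i j hpos
    have hlast : mon3 (ρ (i + 1) j - 1) j (i + 1) ∉ J := (hrow (i + 1) j _).2 (by omega)
    have := (hrow i (j + 1) _).1 (hst.mon3_succ_snd_notMem hlast)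
    omega
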